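/- arXiv:1704.04615 — 8 statements merged into one kernel-verified Lean document; each statement's English description precedes it below -/
import Mathlib

section
/- Let T end with a unique smallest sentinel $. Then comparing two rotations of T lexicographically is equivalent to comparing the corresponding suffixes of T lexicographically: the rotation starting at position i is lexicographically less than the rotation starting at position j if and only if the suffix T[i..n-1] is lexicographically less than the suffix T[j..n-1]. -/
/-!
Two distinct suffixes of a sentinel-terminated string are never prefixes of one another: the
shorter one ends with the sentinel, which occurs nowhere else. Hence their lexicographic
comparison is decided strictly inside the shorter one, and appending anything to either
side — here the wrapped-around prefixes `T.take i`, `T.take j` — cannot change it.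
-/

namespace List

theorem lex_append_iff_of_not_isPrefix {α : Type*} {r : α → α → Prop} :
    ∀ {l₁ l₂ : List α} (s₁ s₂ : List α), ¬ l₁ <+: l₂ → ¬ l₂ <+: l₁ →
      (Lex r (l₁ ++ s₁) (l₂ ++ s₂) ↔ Lex r l₁ l₂)
  | [], _, _, _, h₁, _ => absurd nil_prefix h₁
  | _ :: _, [], _, _, _, h₂ => absurd nil_prefix h₂
  | a :: l₁, b :: l₂, s₁, s₂, h₁, h₂ => by
    simp only [cons_append, cons_lex_cons_iff]
    rcases eq_or_ne a b with rfl | hab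
    · rw [prefix_cons_inj] at h₁ h₂
      rw [lex_append_iff_of_not_isPrefix s₁ s₂ h₁ h₂]
    · simp only [hab, false_and, or_false]

theorem eq_of_drop_isPrefix_drop {α : Type*} {T : List α} {d : α}
    (hlast : T.getLast? = some d) (huniq : ∀ k, k < T.length - 1 → T[k]? ≠ some d)
    {i j : ℕ} (hi : i < T.length) (h : T.drop i <+: T.drop j) : i = j := by
  have hji : j ≤ i := by
    have := h.length_le
    simp only [length_drop] at this
    omega
  by_contra hne
  apply huniq (j + (T.length - 1 - i)) (by omega)
  obtain ⟨t, ht⟩ := h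
  calc T[j + (T.length - 1 - i)]?
      = (T.drop j)[T.length - 1 - i]? := (getElem?_drop ..).symm
    _ = (T.drop i)[T.length - 1 - i]? := by
      rw [← ht, getElem?_append_left (by simp only [length_drop]; omega)]
    _ = T[T.length - 1]? := by rw [getElem?_drop]; congr 1; omega
    _ = some d := by rwa [getLast?_eq_getElem?] at hlast

end List

theorem rotation_lt_iff_suffix_lt_general {α : Type*} [LinearOrder α]
    (T : List α) (dollar : α)
    (hlast : T.getLast? = some dollar)
    (huniq : ∀ k, k < T.length - 1 → T[k]? ≠ some dollar) :
    ∀ i j, i < T.length → j < T.length →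
      (List.Lex (· < ·) (T.drop i ++ T.take i) (T.drop j ++ T.take j) ↔
       List.Lex (· < ·) (T.drop i) (T.drop j)) := by
  intro i j hi hj
  rcases eq_or_ne i j with rfl | hij
  · exact iff_of_false (List.lex_irrefl lt_irrefl _) (List.lex_irrefl lt_irrefl _)
  · exact List.lex_append_iff_of_not_isPrefix _ _
      (fun h => hij (List.eq_of_drop_isPrefix_drop hlast huniq hi h))
      (fun h => hij (List.eq_of_drop_isPrefix_drop hlast huniq hj h).symm)

/-- Comparing rotations of a sentinel-terminated string lexicographically is
equivalent to comparing the corresponding suffixes. -/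
theorem rotation_lt_iff_suffix_lt {α : Type*} [LinearOrder α]
    (T : List α) (dollar : α)
    (hlen : 0 < T.length)
    (hlast : T.getLast? = some dollar)
    (huniq : ∀ k, k < T.length - 1 → T[k]? ≠ some dollar)
    (hmin : ∀ c ∈ T, c ≠ dollar → dollar < c) :
    ∀ i j, i < T.length → j < T.length →
      (List.Lex (· < ·) (T.drop i ++ T.take i) (T.drop j ++ T.take j) ↔
       List.Lex (· < ·) (T.drop i) (T.drop j)) :=
  rotation_lt_iff_suffix_lt_general T dollar hlast huniq
end

section
/- Stability of BWT with respect to F (last-to-first property): for any character s, the i-th occurrence of s in the last column BWT(T) and the i-th occurrence of s in the first column F correspond to the same character occurrence in T. Formally, if positions p < q in BWT(T) both contain character s, then the rotations obtained by moving the last character to the front (i.e., the rows of M(T) starting with s at rows LF(p) and LF(q)) satisfy LF(p) < LF(q). -/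
/-!
Since `$` terminates `T`, row `l` of the rotation matrix is ordered by the suffix
`T.drop (SA l)`, and `l ↦ T.drop (SA l)` is strictly monotone. The sentinel occurs only once,
so it occurs only once in the last column; hence a character `s` occurring at two rows `p < q`
of the last column is not `$`, and both occurrences precede their suffix inside `T`. Then row
`LF l` carries the suffix `s :: T.drop (SA l)`, and prepending the same character preserves the
lexicographic order.
-/

theorem Nat.add_sub_one_mod_of_pos {k n : ℕ} (hk0 : 0 < k) (hk : k < n) :
    (k + n - 1) % n = k - 1 := by
  rw [show k + n - 1 = k - 1 + n by omega, Nat.add_mod_right, Nat.mod_eq_of_lt (by omega)]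

namespace List

variable {α : Type*}

theorem drop_add_sub_one_mod_eq_cons {T : List α} {k : ℕ} {c : α} (hk0 : 0 < k)
    (hk : k < T.length) (hc : T[(k + T.length - 1) % T.length]? = some c) :
    T.drop ((k + T.length - 1) % T.length) = c :: T.drop k := by
  have hpred : k - 1 < T.length := by omega
  rw [Nat.add_sub_one_mod_of_pos hk0 hk, getElem?_eq_getElem hpred, Option.some_inj] at hc
  rw [Nat.add_sub_one_mod_of_pos hk0 hk, drop_eq_getElem_cons hpred, hc, Nat.sub_add_cancel hk0]

theorem pos_of_getElem?_add_sub_one_mod_ne_getLast? {T : List α} {k : ℕ}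
    (hk : k < T.length) (hne : T[(k + T.length - 1) % T.length]? ≠ T.getLast?) : 0 < k := by
  refine Nat.pos_of_ne_zero fun hk0 => hne ?_
  rw [hk0, Nat.zero_add, Nat.mod_eq_of_lt (by omega), getLast?_eq_getElem?]

theorem eq_zero_of_getElem?_add_sub_one_mod_eq {T : List α} {d : α} {k : ℕ}
    (huniq : ∀ k, k < T.length - 1 → T[k]? ≠ some d)
    (hk : k < T.length) (hd : T[(k + T.length - 1) % T.length]? = some d) : k = 0 := by
  by_contra hk0
  rw [Nat.add_sub_one_mod_of_pos (Nat.pos_of_ne_zero hk0) hk] at hd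
  exact huniq (k - 1) (by omega) hd

end List

theorem lf_stability_general {α : Type*} [LinearOrder α]
    (T : List α) (dollar : α)
    (hlast : T.getLast? = some dollar)
    (huniq : ∀ k, k < T.length - 1 → T[k]? ≠ some dollar)
    (SA : Fin T.length → Fin T.length)
    (hSAsort : ∀ i j : Fin T.length, i < j →
      List.Lex (· < ·) (T.drop (SA i)) (T.drop (SA j)))
    -- BWT(T)[l] = T[(SA[l] - 1) mod n]
    (bwt : Fin T.length → α)
    (hbwt : ∀ l : Fin T.length,
      some (bwt l) = T[((SA l : ℕ) + T.length - 1) % T.length]?)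
    -- LF maps row l to the row of the right cyclic shift of row l:
    -- SA[LF(l)] = (SA[l] - 1) mod n
    (LF : Fin T.length → Fin T.length)
    (hLF : ∀ l : Fin T.length,
      (SA (LF l) : ℕ) = ((SA l : ℕ) + T.length - 1) % T.length)
    (s : α) :
    ∀ p q : Fin T.length, p < q → bwt p = s → bwt q = s → LF p < LF q := by
  intro p q hpq hp hq
  have hsuffix : StrictMono fun l => T.drop (SA l) := hSAsort
  have hs : s ≠ dollar := by
    rintro rfl
    have hp0 := List.eq_zero_of_getElem?_add_sub_one_mod_eq huniq (SA p).2 (hp ▸ (hbwt p).symm)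
    have hq0 := List.eq_zero_of_getElem?_add_sub_one_mod_eq huniq (SA q).2 (hq ▸ (hbwt q).symm)
    have hSA : SA p = SA q := Fin.ext (hp0.trans hq0.symm)
    exact hpq.ne (hsuffix.injective (by simp only [hSA]))
  have hshift : ∀ l, bwt l = s → T.drop (SA (LF l)) = s :: T.drop (SA l) := fun l hl => by
    have hc := hl ▸ (hbwt l).symm
    have hl0 := List.pos_of_getElem?_add_sub_one_mod_ne_getLast? (SA l).2
      (by rw [hc, hlast]; exact fun h => hs (Option.some_inj.mp h))
    rw [hLF l, List.drop_add_sub_one_mod_eq_cons hl0 (SA l).2 hc]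
  refine hsuffix.lt_iff_lt.mp ?_
  simp only [hshift p hp, hshift q hq, List.cons_lt_cons_iff, lt_irrefl, false_or, true_and]
  exact hsuffix hpq

/-- Stability (last-to-first property): equal characters keep their relative
order from the last column to the first column, i.e. if p < q and
BWT(T)[p] = BWT(T)[q] = s then LF(p) < LF(q). -/
theorem lf_stability {α : Type*} [LinearOrder α]
    (T : List α) (dollar : α)
    (hlen : 0 < T.length)
    (hlast : T.getLast? = some dollar)
    (huniq : ∀ k, k < T.length - 1 → T[k]? ≠ some dollar)
    (hmin : ∀ c ∈ T, c ≠ dollar → dollar < c)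
    (SA : Fin T.length → Fin T.length)
    (hSAbij : Function.Bijective SA)
    (hSAsort : ∀ i j : Fin T.length, i < j →
      List.Lex (· < ·) (T.drop (SA i)) (T.drop (SA j)))
    -- BWT(T)[l] = T[(SA[l] - 1) mod n]
    (bwt : Fin T.length → α)
    (hbwt : ∀ l : Fin T.length,
      some (bwt l) = T[((SA l : ℕ) + T.length - 1) % T.length]?)
    -- LF maps row l to the row of the right cyclic shift of row l:
    -- SA[LF(l)] = (SA[l] - 1) mod n
    (LF : Fin T.length → Fin T.length)
    (hLF : ∀ l : Fin T.length,
      (SA (LF l) : ℕ) = ((SA l : ℕ) + T.length - 1) % T.length)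
    (s : α) :
    ∀ p q : Fin T.length, p < q → bwt p = s → bwt q = s → LF p < LF q :=
  lf_stability_general T dollar hlast huniq SA hSAsort bwt hbwt LF hLF s
end

section
/- Correctness of the LF-mapping formula: for any row index l, LF(l) = C[BWT(T)[l]] + rank_{BWT(T)[l]}(BWT(T), l), where C[c] is the number of characters in T strictly smaller than c and rank_c(S, l) is the number of occurrences of c in S[0..l-1]. Moreover, if SA[l] ≠ 0 then SA[LF(l)] = SA[l] − 1. -/
/-!
Row `LF l` holds the suffix starting one position before that of row `l`, which is `BWT[l]`
followed by the suffix of row `l` (unless `SA[l] = 0`, where it is the suffix `$`). Comparing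
these suffixes first by their leading character and then by their tails shows that LF is strictly
increasing for the lexicographic order of the keys `(BWT[l], l)`: for equal leading characters the
tails are the suffixes of rows `l`, already in order, and the character `$` heading the exceptional
suffix occurs nowhere else in `T`. Hence `LF l` counts the rows with smaller key, i.e. the rows
`a` with `BWT[a] < BWT[l]`, plus the rows `a < l` with `BWT[a] = BWT[l]`; since BWT permutes the
characters of `T`, the first count is `C[BWT[l]]`.
-/

open Finset Function

namespace List

theorem countP_take_finRange {n : ℕ} (m : ℕ) (p : Fin n → Prop) [DecidablePred p] :
    ((finRange n).take m).countP (fun a => decide (p a)) = #{a | p a ∧ (a : ℕ) < m} := by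
  rw [countP_eq_length_filter,
    ← toFinset_card_of_nodup (((nodup_finRange n).sublist (take_sublist _ _)).filter _)]
  congr 1
  ext a
  simp only [toFinset_filter, Finset.mem_filter, mem_toFinset, mem_take_iff_getElem,
    getElem_finRange, decide_eq_true_eq, mem_univ, true_and]
  grind

theorem countP_eq_card_filter_getElem {α : Type*} (T : List α) (p : α → Prop)
    [DecidablePred p] :
    T.countP (fun c => decide (p c)) = #{i : Fin T.length | p T[i]} := by
  conv_lhs => rw [← ofFn_getElem (xs := T), ofFn_eq_map, countP_map,
    ← take_of_length_le (length_finRange (n := T.length)).le]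
  exact (countP_take_finRange _ (fun i : Fin T.length => p T[i])).trans (by simp)

theorem countP_eq_card_filter_getElem_of_injective {α : Type*} (T : List α) (p : α → Prop)
    [DecidablePred p] {e : Fin T.length → Fin T.length} (he : Injective e) :
    T.countP (fun c => decide (p c)) = #{a | p T[(e a : ℕ)]} := by
  rw [countP_eq_card_filter_getElem]
  exact (card_equiv (Equiv.ofBijective e he.bijective_of_finite) (by simp)).symm

theorem count_take_map_finRange {α : Type*} [DecidableEq α] {n : ℕ} (f : Fin n → α) (m : ℕ)
    (c : α) : (((finRange n).map f).take m).count c = #{a | f a = c ∧ (a : ℕ) < m} := by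
  rw [← map_take, count_eq_countP, countP_map, ← countP_take_finRange]
  rfl

end List

theorem Fin.val_eq_card_filter_lt {n : ℕ} {f : Fin n → Fin n} (hf : Injective f) (l : Fin n) :
    (f l : ℕ) = #{a | f a < f l} := by
  rw [card_equiv (Equiv.ofBijective f hf.bijective_of_finite) (t := Iio (f l)) (by simp),
    Fin.card_Iio]

theorem Function.Injective.of_lt_imp_lt {ι β γ : Type*} [Preorder β] [LinearOrder γ]
    {k : ι → γ} (hk : Injective k) {f : ι → β} (h : ∀ a b, k a < k b → f a < f b) :
    Injective f := by
  intro a b hf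
  by_contra hne
  rcases lt_or_gt_of_ne (hk.ne hne) with hlt | hgt
  · exact (h a b hlt).ne hf
  · exact (h b a hgt).ne' hf

theorem lt_iff_lt_of_lt_imp_lt {ι β γ : Type*} [Preorder β] [LinearOrder γ] {k : ι → γ}
    (hk : Injective k) {f : ι → β} (h : ∀ a b, k a < k b → f a < f b) (a b : ι) :
    f a < f b ↔ k a < k b := by
  refine ⟨fun hf => ?_, h a b⟩
  rcases lt_trichotomy (k a) (k b) with hlt | heq | hgt
  · exact hlt
  · rw [hk heq] at hf
    exact absurd hf (lt_irrefl _)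
  · exact absurd (h b a hgt) (not_lt_of_gt hf)

theorem injective_toLex_apply_self {ι β : Type*} (f : ι → β) :
    Injective fun a => toLex (f a, a) :=
  fun _ _ h => congrArg Prod.snd (toLex.injective h)

section LFMapping

variable {α : Type*} {T : List α} {SA LF : Fin T.length → Fin T.length}
  {bwt : Fin T.length → α}

theorem val_SA_LF_add_one
    (hLF : ∀ l, (SA (LF l) : ℕ) = ((SA l : ℕ) + T.length - 1) % T.length) {l : Fin T.length}
    (h0 : (SA l : ℕ) ≠ 0) : (SA (LF l) : ℕ) + 1 = SA l := by
  have := (SA l).isLt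
  rw [hLF, show (SA l : ℕ) + T.length - 1 = (SA l - 1) + T.length by omega, Nat.add_mod_right,
    Nat.mod_eq_of_lt (by omega)]
  omega

theorem val_SA_LF_of_SA_eq_zero
    (hLF : ∀ l, (SA (LF l) : ℕ) = ((SA l : ℕ) + T.length - 1) % T.length) {l : Fin T.length}
    (h0 : (SA l : ℕ) = 0) : (SA (LF l) : ℕ) = T.length - 1 := by
  rw [hLF, h0, zero_add, Nat.mod_eq_of_lt (by have := l.pos; omega)]

theorem drop_SA_LF (hbwt : ∀ l, bwt l = T[(SA (LF l) : ℕ)]) (l : Fin T.length) :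
    T.drop (SA (LF l)) = bwt l :: T.drop (SA (LF l) + 1) := by
  rw [hbwt]
  exact List.drop_eq_getElem_cons _

theorem drop_SA_LF_of_SA_ne_zero (hbwt : ∀ l, bwt l = T[(SA (LF l) : ℕ)])
    (hLF : ∀ l, (SA (LF l) : ℕ) = ((SA l : ℕ) + T.length - 1) % T.length) {l : Fin T.length}
    (h0 : (SA l : ℕ) ≠ 0) : T.drop (SA (LF l)) = bwt l :: T.drop (SA l) := by
  rw [drop_SA_LF hbwt, val_SA_LF_add_one hLF h0]

theorem bwt_eq_iff_SA_eq_zero {dollar : α} (hlast : T.getLast? = some dollar)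
    (huniq : ∀ k, k < T.length - 1 → T[k]? ≠ some dollar)
    (hbwt : ∀ l, bwt l = T[(SA (LF l) : ℕ)])
    (hLF : ∀ l, (SA (LF l) : ℕ) = ((SA l : ℕ) + T.length - 1) % T.length) (l : Fin T.length) :
    bwt l = dollar ↔ (SA l : ℕ) = 0 := by
  constructor
  · intro hl
    by_contra h0
    refine huniq (SA (LF l)) (by have := val_SA_LF_add_one hLF h0; omega) ?_
    rw [List.getElem?_eq_getElem (SA (LF l)).isLt, ← hbwt, hl]
  · intro h0
    rw [List.getLast?_eq_getElem?, ← val_SA_LF_of_SA_eq_zero hLF h0,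
      List.getElem?_eq_getElem (SA (LF l)).isLt, ← hbwt] at hlast
    exact Option.some.inj hlast

theorem SA_ne_zero_of_bwt_eq (hSA : Injective SA) {dollar : α}
    (hlast : T.getLast? = some dollar) (huniq : ∀ k, k < T.length - 1 → T[k]? ≠ some dollar)
    (hbwt : ∀ l, bwt l = T[(SA (LF l) : ℕ)])
    (hLF : ∀ l, (SA (LF l) : ℕ) = ((SA l : ℕ) + T.length - 1) % T.length) {a b : Fin T.length}
    (heq : bwt a = bwt b) (hne : a ≠ b) : (SA a : ℕ) ≠ 0 := by
  have hdollar := bwt_eq_iff_SA_eq_zero hlast huniq hbwt hLF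
  intro h0
  have h0' : (SA b : ℕ) = 0 := (hdollar b).mp (heq ▸ (hdollar a).mpr h0)
  exact hne (hSA (Fin.ext (h0.trans h0'.symm)))

theorem card_filter_bwt (hSA : Injective SA) (hLF : Injective LF)
    (hbwt : ∀ l, bwt l = T[(SA (LF l) : ℕ)]) (p : α → Prop) [DecidablePred p] :
    #{a | p (bwt a)} = T.countP (fun c => decide (p c)) := by
  rw [List.countP_eq_card_filter_getElem_of_injective T p (hSA.comp hLF)]
  simp only [hbwt, Function.comp_apply]

variable [LinearOrder α]

theorem injective_of_strictMono_drop (hSA : StrictMono fun i => T.drop (SA i)) : Injective SA :=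
  Injective.of_comp (f := fun j : Fin T.length => T.drop j) hSA.injective

theorem LF_lt_LF_of_toLex_lt (hSA : StrictMono fun i => T.drop (SA i)) {dollar : α}
    (hlast : T.getLast? = some dollar) (huniq : ∀ k, k < T.length - 1 → T[k]? ≠ some dollar)
    (hbwt : ∀ l, bwt l = T[(SA (LF l) : ℕ)])
    (hLF : ∀ l, (SA (LF l) : ℕ) = ((SA l : ℕ) + T.length - 1) % T.length) {a b : Fin T.length}
    (hab : toLex (bwt a, a) < toLex (bwt b, b)) : LF a < LF b := by
  rw [← hSA.lt_iff_lt]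
  rcases Prod.Lex.toLex_lt_toLex.mp hab with
    (hlt : bwt a < bwt b) | ⟨(heq : bwt a = bwt b), (hlt : a < b)⟩
  · rw [drop_SA_LF hbwt, drop_SA_LF hbwt]
    exact List.Lex.rel hlt
  · have hSA_inj := injective_of_strictMono_drop hSA
    rw [drop_SA_LF_of_SA_ne_zero hbwt hLF
        (SA_ne_zero_of_bwt_eq hSA_inj hlast huniq hbwt hLF heq hlt.ne),
      drop_SA_LF_of_SA_ne_zero hbwt hLF
        (SA_ne_zero_of_bwt_eq hSA_inj hlast huniq hbwt hLF heq.symm hlt.ne'), heq]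
    exact List.Lex.cons (hSA hlt)

theorem LF_injective (hSA : StrictMono fun i => T.drop (SA i)) {dollar : α}
    (hlast : T.getLast? = some dollar) (huniq : ∀ k, k < T.length - 1 → T[k]? ≠ some dollar)
    (hbwt : ∀ l, bwt l = T[(SA (LF l) : ℕ)])
    (hLF : ∀ l, (SA (LF l) : ℕ) = ((SA l : ℕ) + T.length - 1) % T.length) : Injective LF :=
  (injective_toLex_apply_self bwt).of_lt_imp_lt fun _ _ =>
    LF_lt_LF_of_toLex_lt hSA hlast huniq hbwt hLF

theorem LF_lt_LF_iff (hSA : StrictMono fun i => T.drop (SA i)) {dollar : α}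
    (hlast : T.getLast? = some dollar) (huniq : ∀ k, k < T.length - 1 → T[k]? ≠ some dollar)
    (hbwt : ∀ l, bwt l = T[(SA (LF l) : ℕ)])
    (hLF : ∀ l, (SA (LF l) : ℕ) = ((SA l : ℕ) + T.length - 1) % T.length)
    (a b : Fin T.length) : LF a < LF b ↔ toLex (bwt a, a) < toLex (bwt b, b) :=
  lt_iff_lt_of_lt_imp_lt (injective_toLex_apply_self bwt)
    (fun _ _ => LF_lt_LF_of_toLex_lt hSA hlast huniq hbwt hLF) a b

theorem val_LF_eq_card (hSA : StrictMono fun i => T.drop (SA i)) {dollar : α}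
    (hlast : T.getLast? = some dollar) (huniq : ∀ k, k < T.length - 1 → T[k]? ≠ some dollar)
    (hbwt : ∀ l, bwt l = T[(SA (LF l) : ℕ)])
    (hLF : ∀ l, (SA (LF l) : ℕ) = ((SA l : ℕ) + T.length - 1) % T.length) (l : Fin T.length) :
    (LF l : ℕ) = #{a | bwt a < bwt l} + #{a | bwt a = bwt l ∧ a < l} := by
  have hdisj : Disjoint (α := Finset (Fin T.length)) {a | bwt a < bwt l}
      {a | bwt a = bwt l ∧ a < l} :=
    disjoint_filter.mpr fun _ _ hlt heq => hlt.ne heq.1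
  rw [Fin.val_eq_card_filter_lt (LF_injective hSA hlast huniq hbwt hLF),
    ← card_union_of_disjoint hdisj, ← filter_or]
  congr 1
  ext a
  simp only [mem_filter, mem_univ, true_and]
  exact (LF_lt_LF_iff hSA hlast huniq hbwt hLF a l).trans Prod.Lex.toLex_lt_toLex

end LFMapping

theorem lf_formula_correct_general {α : Type*} [LinearOrder α]
    (T : List α) (dollar : α)
    (hlast : T.getLast? = some dollar)
    (huniq : ∀ k, k < T.length - 1 → T[k]? ≠ some dollar)
    (SA : Fin T.length → Fin T.length)
    (hSAsort : ∀ i j : Fin T.length, i < j →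
      List.Lex (· < ·) (T.drop (SA i)) (T.drop (SA j)))
    (bwt : Fin T.length → α)
    (hbwt : ∀ l : Fin T.length,
      some (bwt l) = T[((SA l : ℕ) + T.length - 1) % T.length]?)
    (LF : Fin T.length → Fin T.length)
    (hLF : ∀ l : Fin T.length,
      (SA (LF l) : ℕ) = ((SA l : ℕ) + T.length - 1) % T.length) :
    ∀ l : Fin T.length,
      -- C[bwt l] = number of characters of T strictly smaller than bwt l;
      -- rank_{bwt l}(BWT(T), l) = count of bwt l in the first l entries of BWT(T)
      ((LF l : ℕ) = T.countP (fun c => decide (c < bwt l)) +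
        ((((List.finRange T.length).map bwt).take (l : ℕ)).count (bwt l))) ∧
      ((SA l : ℕ) ≠ 0 → (SA (LF l) : ℕ) = (SA l : ℕ) - 1) := by
  have hSA : StrictMono fun i => T.drop (SA i) := hSAsort
  have hSA_inj := injective_of_strictMono_drop hSA
  have hbwt_SA_LF : ∀ l, bwt l = T[(SA (LF l) : ℕ)] := fun l => by
    have h := hbwt l
    rw [← hLF l, List.getElem?_eq_getElem (SA (LF l)).isLt] at h
    exact Option.some.inj h
  intro l
  refine ⟨?_, fun h0 => by have := val_SA_LF_add_one hLF h0; omega⟩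
  rw [val_LF_eq_card hSA hlast huniq hbwt_SA_LF hLF,
    ← card_filter_bwt hSA_inj (LF_injective hSA hlast huniq hbwt_SA_LF hLF) hbwt_SA_LF,
    List.count_take_map_finRange]
  simp only [Fin.lt_def]

/-- Correctness of the LF-mapping formula:
LF(l) = C[BWT(T)[l]] + rank_{BWT(T)[l]}(BWT(T), l); moreover if SA[l] ≠ 0
then SA[LF(l)] = SA[l] - 1. -/
theorem lf_formula_correct {α : Type*} [LinearOrder α]
    (T : List α) (dollar : α)
    (hlen : 0 < T.length)
    (hlast : T.getLast? = some dollar)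
    (huniq : ∀ k, k < T.length - 1 → T[k]? ≠ some dollar)
    (hmin : ∀ c ∈ T, c ≠ dollar → dollar < c)
    (SA : Fin T.length → Fin T.length)
    (hSAbij : Function.Bijective SA)
    (hSAsort : ∀ i j : Fin T.length, i < j →
      List.Lex (· < ·) (T.drop (SA i)) (T.drop (SA j)))
    (bwt : Fin T.length → α)
    (hbwt : ∀ l : Fin T.length,
      some (bwt l) = T[((SA l : ℕ) + T.length - 1) % T.length]?)
    (LF : Fin T.length → Fin T.length)
    (hLF : ∀ l : Fin T.length,
      (SA (LF l) : ℕ) = ((SA l : ℕ) + T.length - 1) % T.length) :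
    ∀ l : Fin T.length,
      -- C[bwt l] = number of characters of T strictly smaller than bwt l;
      -- rank_{bwt l}(BWT(T), l) = count of bwt l in the first l entries of BWT(T)
      ((LF l : ℕ) = T.countP (fun c => decide (c < bwt l)) +
        ((((List.finRange T.length).map bwt).take (l : ℕ)).count (bwt l))) ∧
      ((SA l : ℕ) ≠ 0 → (SA (LF l) : ℕ) = (SA l : ℕ) - 1) :=
  lf_formula_correct_general T dollar hlast huniq SA hSAsort bwt hbwt LF hLF
end

section
/- LF is a bijection (permutation) on {0, 1, ..., n−1}. -/
theorem Fin.val_add_sub_one_mod_injective (n : ℕ) :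
    Function.Injective fun i : Fin n => ((i : ℕ) + n - 1) % n := by
  intro i j hij
  have hn : 1 ≤ n := i.pos
  have hmod : (i : ℕ) + (n - 1) ≡ j + (n - 1) [MOD n] := by
    simpa only [Nat.ModEq, Nat.add_sub_assoc hn] using hij
  have hcong : (i : ℕ) ≡ j [MOD n] := Nat.ModEq.add_right_cancel' (n - 1) hmod
  exact Fin.ext (by simpa only [Nat.ModEq, Nat.mod_eq_of_lt i.isLt, Nat.mod_eq_of_lt j.isLt]
    using hcong)

theorem lf_bijective_general {α : Type*}
    (T : List α)
    (SA : Fin T.length → Fin T.length)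
    (hSAbij : Function.Bijective SA)
    (LF : Fin T.length → Fin T.length)
    (hLF : ∀ l : Fin T.length,
      (SA (LF l) : ℕ) = ((SA l : ℕ) + T.length - 1) % T.length) :
    Function.Bijective LF := by
  refine Finite.injective_iff_bijective.mp fun a b hab => ?_
  apply hSAbij.injective
  apply Fin.val_add_sub_one_mod_injective
  simp only [← hLF, hab]

/-- LF is a bijection on row indices. -/
theorem lf_bijective {α : Type*} [LinearOrder α]
    (T : List α) (dollar : α)
    (hlen : 0 < T.length)
    (hlast : T.getLast? = some dollar)
    (huniq : ∀ k, k < T.length - 1 → T[k]? ≠ some dollar)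
    (hmin : ∀ c ∈ T, c ≠ dollar → dollar < c)
    (SA : Fin T.length → Fin T.length)
    (hSAbij : Function.Bijective SA)
    (hSAsort : ∀ i j : Fin T.length, i < j →
      List.Lex (· < ·) (T.drop (SA i)) (T.drop (SA j)))
    (LF : Fin T.length → Fin T.length)
    (hLF : ∀ l : Fin T.length,
      (SA (LF l) : ℕ) = ((SA l : ℕ) + T.length - 1) % T.length) :
    Function.Bijective LF :=
  lf_bijective_general T SA hSAbij LF hLF
end

section
/- Theorem 1 (FMtree partition theorem): Let L(P, T) denote the set of occurrence positions of pattern P in text T, and for a pattern Q let FM(Q, T) denote the set of occurrence positions y of Q in T with y mod D = 0 (the sampled occurrences). Then L(P, T) = ⋃_{i=0}^{D−1} { y + i : y ∈ ⋃_{W ∈ Σ^i} FM(W·P, T) }, where Σ^i ranges over all strings of length i over the alphabet and W·P denotes concatenation. -/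
/-- y is an occurrence position of Q in T: T[y..y+|Q|-1] = Q. -/
def Occ {α : Type*} (T Q : List α) (y : ℕ) : Prop :=
  y + Q.length ≤ T.length ∧ Q <+: T.drop y

/-!
Every position `x` is `y + i` with `y = D * (x / D)` a multiple of `D` and `i = x % D < D`.
An occurrence of `W ++ P` at `y` is exactly an occurrence of `W` at `y` followed by an
occurrence of `P` at `y + |W|`, and the text itself supplies the only possible `W`, namely
its `i` letters starting at `y`.
-/

theorem List.append_prefix_iff {α : Type*} {W P L : List α} :
    W ++ P <+: L ↔ W <+: L ∧ P <+: L.drop W.length := by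
  constructor
  · rintro ⟨s, rfl⟩
    exact ⟨List.prefix_append_of_prefix (List.prefix_append W P), by simp⟩
  · rintro ⟨hW, s, hs⟩
    refine ⟨s, ?_⟩
    rw [List.append_assoc, hs]
    exact (List.prefix_append_drop hW).symm

theorem occ_append_iff {α : Type*} {T W P : List α} {y : ℕ} :
    Occ T (W ++ P) y ↔ Occ T W y ∧ Occ T P (y + W.length) := by
  simp only [Occ, List.append_prefix_iff, List.drop_drop, List.length_append]
  constructor
  · rintro ⟨hlen, hW, hP⟩
    exact ⟨⟨by omega, hW⟩, by omega, hP⟩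
  · rintro ⟨⟨-, hW⟩, hlen, hP⟩
    exact ⟨by omega, hW, hP⟩

theorem occ_take_drop {α : Type*} {T : List α} {y i : ℕ} (h : y + i ≤ T.length) :
    Occ T ((T.drop y).take i) y :=
  ⟨by simp only [List.length_take, List.length_drop]; omega, List.take_prefix i _⟩

/-- Theorem 1 (FMtree partition theorem): the occurrence positions of P in T
are exactly the positions y + i where 0 ≤ i ≤ D-1, W ranges over all strings
of length i over the alphabet, and y is an occurrence of W·P divisible by D. -/
theorem fmtree_partition {α : Type*} (T P : List α) (D : ℕ) (hD : 1 ≤ D) :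
    ∀ x : ℕ, Occ T P x ↔
      ∃ i < D, ∃ W : List α, W.length = i ∧
        ∃ y : ℕ, y % D = 0 ∧ Occ T (W ++ P) y ∧ x = y + i := by
  intro x
  constructor
  · intro hP
    set i := x % D
    set y := D * (x / D)
    have hx : x = y + i := (Nat.div_add_mod x D).symm
    have hle : y + i ≤ T.length := by have := hP.1; omega
    have hW : ((T.drop y).take i).length = i := by
      simp only [List.length_take, List.length_drop]; omega
    refine ⟨i, Nat.mod_lt x hD, _, hW, y, Nat.mul_mod_right D _,
      occ_append_iff.mpr ⟨occ_take_drop hle, ?_⟩, hx⟩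
    rwa [hW, ← hx]
  · rintro ⟨i, -, W, rfl, y, -, hWP, rfl⟩
    exact (occ_append_iff.mp hWP).2
end

section
/- Theorem 2 (early leaf calculation): With notation as before, L(P, T) = ⋃_{i=1}^{D} { y − i : y ∈ FM(P[i..|P|−1], T), y ≥ i, T[y−i..y−1] = P[0..i−1] }, where FM(Q, T) is the set of occurrence positions of Q in T divisible by D. -/
/-! The pattern `P` occurs at `x` iff, for any cut point `i ≤ |P|`, the prefix `P[0..i-1]` is read
at `x` and the suffix `P[i..]` occurs at `x + i`. Cutting at `i = D - x mod D ∈ [1, D]` makes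
`x + i` a multiple of `D`, so every occurrence is found from a sampled occurrence of a suffix. -/

namespace List

variable {α : Type*}

theorem isPrefix_iff_take_eq_and_drop_isPrefix_drop {P L : List α} {i : ℕ} (hi : i ≤ P.length) :
    P <+: L ↔ L.take i = P.take i ∧ P.drop i <+: L.drop i := by
  constructor
  · intro h
    refine ⟨?_, h.drop i⟩
    conv_rhs => rw [prefix_iff_eq_take.mp h, take_take, Nat.min_eq_left hi]
  · rintro ⟨htake, hdrop⟩
    rw [← take_append_drop i P, ← take_append_drop i L, htake]
    exact (prefix_append_right_inj _).mpr hdrop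

end List

theorem occ_iff_take_eq_and_occ_drop {α : Type*} {T P : List α} {x i : ℕ} (hi : i ≤ P.length) :
    Occ T P x ↔ (T.drop x).take i = P.take i ∧ Occ T (P.drop i) (x + i) := by
  have hlen : x + P.length ≤ T.length ↔ x + i + (P.drop i).length ≤ T.length := by
    rw [List.length_drop]; omega
  rw [Occ, Occ, hlen, List.isPrefix_iff_take_eq_and_drop_isPrefix_drop hi, List.drop_drop]
  tauto

theorem Nat.exists_pos_le_add_mod_eq_zero {D : ℕ} (hD : 0 < D) (x : ℕ) :
    ∃ i, 1 ≤ i ∧ i ≤ D ∧ (x + i) % D = 0 := by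
  have hlt := Nat.mod_lt x hD
  have hdiv := Nat.div_add_mod x D
  refine ⟨D - x % D, by omega, Nat.sub_le _ _, ?_⟩
  rw [show x + (D - x % D) = D * (x / D + 1) by rw [Nat.mul_add]; omega, Nat.mul_mod_right]

/-- Theorem 2 (early leaf calculation):
L(P,T) = ⋃_{i=1}^{D} { y - i : y ∈ FM(P[i..|P|-1], T), y ≥ i,
T[y-i..y-1] = P[0..i-1] }. -/
theorem early_leaf_calculation {α : Type*} (T P : List α) (D : ℕ)
    (hD : 1 ≤ D) (hPD : D ≤ P.length) :
    ∀ x : ℕ, Occ T P x ↔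
      ∃ i : ℕ, 1 ≤ i ∧ i ≤ D ∧
        ∃ y : ℕ, y % D = 0 ∧ Occ T (P.drop i) y ∧ i ≤ y ∧
          (T.drop (y - i)).take i = P.take i ∧ x = y - i := by
  intro x
  constructor
  · intro hx
    obtain ⟨i, hi1, hiD, hmod⟩ := Nat.exists_pos_le_add_mod_eq_zero hD x
    obtain ⟨htake, hocc⟩ := (occ_iff_take_eq_and_occ_drop (hiD.trans hPD)).mp hx
    exact ⟨i, hi1, hiD, x + i, hmod, hocc, Nat.le_add_left i x, by rwa [Nat.add_sub_cancel],
      (Nat.add_sub_cancel x i).symm⟩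
  · rintro ⟨i, -, hiD, y, -, hocc, hiy, htake, rfl⟩
    rw [occ_iff_take_eq_and_occ_drop (hiD.trans hPD), Nat.sub_add_cancel hiy]
    exact ⟨htake, hocc⟩
end

section
/- For each 1 ≤ i ≤ D, the set Lg_{(D−i) mod D}(P, T) of occurrence positions x of P in T with x mod D = (D−i) mod D equals { y − i : y ∈ FM(P[i..|P|−1], T), y ≥ i, T[y−i..y−1] = P[0..i−1] }. -/
theorem List.prefix_iff_take_eq_and_drop_prefix {α : Type*} {P L : List α} {i : ℕ}
    (hi : i ≤ P.length) : P <+: L ↔ L.take i = P.take i ∧ P.drop i <+: L.drop i := by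
  constructor
  · rintro ⟨s, rfl⟩
    rw [List.take_append_of_le_length hi, List.drop_append_of_le_length hi]
    exact ⟨rfl, List.prefix_append _ _⟩
  · rintro ⟨htake, hdrop⟩
    rw [← List.take_append_drop i L, ← List.take_append_drop i P, htake]
    exact (List.prefix_append_right_inj _).2 hdrop

theorem Nat.mod_eq_sub_mod_iff_add_mod_eq_zero {x D i : ℕ} (h : i ≤ D) :
    x % D = (D - i) % D ↔ (x + i) % D = 0 := by
  have hD : (D - i + i) % D = 0 := by rw [Nat.sub_add_cancel h, Nat.mod_self]
  rw [← hD]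
  exact ⟨Nat.ModEq.add_right i, Nat.ModEq.add_right_cancel' i⟩

theorem occ_iff_occ_drop_and_take_eq {α : Type*} {T P : List α} {i : ℕ} (hi : i ≤ P.length)
    (x : ℕ) : Occ T P x ↔ Occ T (P.drop i) (x + i) ∧ (T.drop x).take i = P.take i := by
  have hlen : x + P.length ≤ T.length ↔ x + i + (P.drop i).length ≤ T.length := by
    rw [List.length_drop]; omega
  rw [Occ, Occ, List.prefix_iff_take_eq_and_drop_prefix hi, List.drop_drop, hlen]
  tauto

theorem early_leaf_residue_class_general {α : Type*} (T P : List α) (D i : ℕ)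
    (h2 : i ≤ D) (hiP : i ≤ P.length) :
    ∀ x : ℕ, (Occ T P x ∧ x % D = (D - i) % D) ↔
      ∃ y : ℕ, y % D = 0 ∧ Occ T (P.drop i) y ∧ i ≤ y ∧
        (T.drop (y - i)).take i = P.take i ∧ x = y - i := by
  intro x
  rw [occ_iff_occ_drop_and_take_eq hiP, Nat.mod_eq_sub_mod_iff_add_mod_eq_zero h2]
  constructor
  · rintro ⟨⟨hocc, htake⟩, hmod⟩
    exact ⟨x + i, hmod, hocc, Nat.le_add_left i x, by rwa [Nat.add_sub_cancel], by omega⟩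
  · rintro ⟨y, hmod, hocc, hiy, htake, rfl⟩
    rw [Nat.sub_add_cancel hiy]
    exact ⟨⟨hocc, htake⟩, hmod⟩

/-- For each 1 ≤ i ≤ D, the occurrence positions x of P with
x mod D = (D - i) mod D are exactly { y - i : y ∈ FM(P[i..|P|-1], T), y ≥ i,
T[y-i..y-1] = P[0..i-1] }. -/
theorem early_leaf_residue_class {α : Type*} (T P : List α) (D i : ℕ)
    (h1 : 1 ≤ i) (h2 : i ≤ D) (hiP : i ≤ P.length) :
    ∀ x : ℕ, (Occ T P x ∧ x % D = (D - i) % D) ↔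
      ∃ y : ℕ, y % D = 0 ∧ Occ T (P.drop i) y ∧ i ≤ y ∧
        (T.drop (y - i)).take i = P.take i ∧ x = y - i :=
  early_leaf_residue_class_general T P D i h2 hiP
end

section
/- Image of an SA interval under LF restricted to one character: given an interval [sp, ep] of suffix-array indices, and a character s, the set { LF(k) : sp ≤ k ≤ ep, BWT(T)[k] = s } is exactly the contiguous interval [C[s] + rank_s(BWT(T), sp), C[s] + rank_s(BWT(T), ep+1) − 1]. -/
/-- C[s]: number of characters of T strictly smaller than s. -/
def cntLt {α : Type*} [LinearOrder α] (T : List α) (s : α) : ℕ :=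
  T.countP (fun c => decide (c < s))

/-- rank_s(L, l): number of occurrences of s in L[0..l-1]. -/
def rnk {α : Type*} [DecidableEq α] (L : List α) (s : α) (l : ℕ) : ℕ :=
  (L.take l).count s

/-!
The rank `rnk L a` grows by exactly one at each occurrence of `a` and is constant elsewhere,
so the ranks of the occurrences of `a` in `L[sp..ep]` are exactly the integers in
`[rnk L a sp, rnk L a (ep + 1))`. For `B` the BWT, `LF` is `C[s]` plus this rank on those
occurrences, which gives the interval.
-/

section Rank

variable {α : Type*} [DecidableEq α] (L : List α) (a : α)

theorem rnk_succ (k : ℕ) : rnk L a (k + 1) = rnk L a k + if L[k]? = some a then 1 else 0 := by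
  cases h : L[k]? <;> simp [rnk, List.take_add_one, h, List.count_singleton]

theorem rnk_mono : Monotone (rnk L a) := fun _ _ h =>
  (List.take_sublist_take_left h).count_le a

theorem rnk_succ_of_getElem? {k : ℕ} (hk : L[k]? = some a) : rnk L a (k + 1) = rnk L a k + 1 := by
  simp [rnk_succ, hk]

theorem exists_rnk_eq_iff (sp ep j : ℕ) :
    (∃ k, sp ≤ k ∧ k < ep ∧ L[k]? = some a ∧ rnk L a k = j) ↔
      rnk L a sp ≤ j ∧ j < rnk L a ep := by
  constructor
  · rintro ⟨k, hspk, hkep, hk, rfl⟩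
    have hsucc := rnk_succ_of_getElem? L a hk
    have hle := rnk_mono L a (show k + 1 ≤ ep by omega)
    exact ⟨rnk_mono L a hspk, by omega⟩
  · induction ep with
    | zero => simp [rnk]
    | succ ep ih =>
      rintro ⟨hsp, hj⟩
      by_cases hlt : j < rnk L a ep
      · obtain ⟨k, hspk, hkep, hk, hkj⟩ := ih ⟨hsp, hlt⟩
        exact ⟨k, hspk, by omega, hk, hkj⟩
      · have hstep := rnk_succ L a ep
        have hep : L[ep]? = some a := by by_contra h; simp [h] at hstep; omega
        have hspep : sp ≤ ep := by
          by_contra h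
          have := rnk_mono L a (show ep + 1 ≤ sp by omega)
          omega
        have hsucc := rnk_succ_of_getElem? L a hep
        exact ⟨ep, hspep, by omega, hep, by omega⟩

end Rank

theorem lf_interval_image_general {α : Type*} [LinearOrder α]
    (T : List α)
    (bwt : Fin T.length → α)
    (B : List α) (hB : B = (List.finRange T.length).map bwt)
    (LF : Fin T.length → ℕ)
    (hLF : ∀ l : Fin T.length, LF l = cntLt T (bwt l) + rnk B (bwt l) (l : ℕ))
    (s : α) (sp ep : ℕ) :
    ∀ m : ℕ,
      (∃ k : Fin T.length, sp ≤ (k : ℕ) ∧ (k : ℕ) ≤ ep ∧ bwt k = s ∧ LF k = m) ↔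
      ((cntLt T s + rnk B s sp : ℤ) ≤ (m : ℤ) ∧
       (m : ℤ) ≤ (cntLt T s : ℤ) + rnk B s (ep + 1) - 1) := by
  intro m
  have hBget : ∀ k : Fin T.length, B[(k : ℕ)]? = some (bwt k) := by simp [hB]
  constructor
  · rintro ⟨k, hspk, hkep, rfl, rfl⟩
    have hrange := (exists_rnk_eq_iff B (bwt k) sp (ep + 1) _).1
      ⟨k, hspk, by omega, hBget k, rfl⟩
    rw [hLF]
    omega
  · rintro ⟨hlo, hhi⟩
    obtain ⟨k, hspk, hkep, hk, hkj⟩ :=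
      (exists_rnk_eq_iff B s sp (ep + 1) (m - cntLt T s)).2 ⟨by omega, by omega⟩
    have hkT : k < T.length := by simpa [hB] using (List.getElem?_eq_some_iff.1 hk).1
    have hks : bwt ⟨k, hkT⟩ = s := Option.some.inj ((hBget ⟨k, hkT⟩).symm.trans hk)
    refine ⟨⟨k, hkT⟩, hspk, Nat.lt_succ_iff.1 hkep, hks, ?_⟩
    rw [hLF, hks, Fin.val_mk]
    omega

/-- Image of an SA interval under LF restricted to one character s:
{ LF(k) : sp ≤ k ≤ ep, BWT(T)[k] = s } is exactly the contiguous interval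
[C[s] + rank_s(BWT, sp), C[s] + rank_s(BWT, ep+1) - 1] (empty when the two
ranks coincide). -/
theorem lf_interval_image {α : Type*} [LinearOrder α]
    (T : List α) (dollar : α)
    (hlen : 0 < T.length)
    (hlast : T.getLast? = some dollar)
    (huniq : ∀ k, k < T.length - 1 → T[k]? ≠ some dollar)
    (hmin : ∀ c ∈ T, c ≠ dollar → dollar < c)
    (SA : Fin T.length → Fin T.length)
    (hSAbij : Function.Bijective SA)
    (hSAsort : ∀ i j : Fin T.length, i < j →
      List.Lex (· < ·) (T.drop (SA i)) (T.drop (SA j)))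
    (bwt : Fin T.length → α)
    (hbwt : ∀ l : Fin T.length,
      some (bwt l) = T[((SA l : ℕ) + T.length - 1) % T.length]?)
    (B : List α) (hB : B = (List.finRange T.length).map bwt)
    (LF : Fin T.length → ℕ)
    (hLF : ∀ l : Fin T.length, LF l = cntLt T (bwt l) + rnk B (bwt l) (l : ℕ))
    (s : α) (sp ep : ℕ) (hsp : sp ≤ ep) (hep : ep < T.length) :
    ∀ m : ℕ,
      (∃ k : Fin T.length, sp ≤ (k : ℕ) ∧ (k : ℕ) ≤ ep ∧ bwt k = s ∧ LF k = m) ↔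
      ((cntLt T s + rnk B s sp : ℤ) ≤ (m : ℤ) ∧
       (m : ℤ) ≤ (cntLt T s : ℤ) + rnk B s (ep + 1) - 1) :=
  lf_interval_image_general T bwt B hB LF hLF s sp ep
end
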